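/- Let X be a type with a symmetric similarity function w : X → X → ℝ. Let A be a nonempty finite set of points of X with at least two elements, let x be a point of X, and let θ₀ > 0, λ > 0 be reals. Define the depth-adaptive threshold θ(d) = θ₀ · exp(λ·d), the intra-cluster average similarity w̄(A) = (1 / (|A|·(|A|−1)/2)) · Σ over unordered pairs {a, a′} of distinct elements of A of w(a, a′), and the inter-cluster average similarity w̄(A, x) = (1/|A|) · Σ over a ∈ A of w(a, x). If, for some natural number d ≥ 1, the traversal rejection condition w̄(A, x) ≤ θ(d) holds and the cluster-formation condition w̄(A) ≥ θ(d−1) holds, then w̄(A) ≥ exp(−λ) · w̄(A, x); that is, the β-well-separated conclusion w̄(A) ≥ β · w̄(A, x) holds with β = exp(−λ), and moreover 0 < exp(−λ) < 1 so this β lies in the admissible range (0, 1]. -/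
import Mathlib

open Finset

/-- For a symmetric similarity `w`, a finite cluster `A` with at least two elements and a
new point `x`, with depth-adaptive threshold `θ(d) = θ₀ · exp(λ·d)`: if the traversal
rejection condition `w̄(A, x) ≤ θ(d)` and the cluster-formation condition
`w̄(A) ≥ θ(d−1)` hold for some `d ≥ 1`, then the β-well-separated conclusion
`w̄(A) ≥ β · w̄(A, x)` holds with `β = exp(−λ)`, and `0 < exp(−λ) < 1`.
Here `w̄(A)` is the average similarity over unordered pairs of distinct elements of `A`
(the sum over such pairs equals half the sum over `A.offDiag` by symmetry), and
`w̄(A, x)` is the average similarity between `x` and the points of `A`. -/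
theorem memtree_beta_well_separated
    {X : Type*} [DecidableEq X] (w : X → X → ℝ)
    (hw_symm : ∀ a b : X, w a b = w b a)
    (A : Finset X) (hA : 2 ≤ A.card) (x : X)
    (θ₀ lam : ℝ) (hθ₀ : θ₀ > 0) (hlam : lam > 0)
    (θ : ℕ → ℝ) (hθ : ∀ d : ℕ, θ d = θ₀ * Real.exp (lam * d))
    (wIntra wInter : ℝ)
    (hIntra : wIntra =
      (1 / (((A.card : ℝ) * ((A.card : ℝ) - 1)) / 2)) *
        ((∑ p ∈ A.offDiag, w p.1 p.2) / 2))
    (hInter : wInter = (1 / (A.card : ℝ)) * ∑ a ∈ A, w a x)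
    (d : ℕ) (hd : 1 ≤ d)
    (hreject : wInter ≤ θ d)
    (hform : wIntra ≥ θ (d - 1)) :
    wIntra ≥ Real.exp (-lam) * wInter ∧
      0 < Real.exp (-lam) ∧ Real.exp (-lam) < 1 := by
  have hcast : ((d - 1 : ℕ) : ℝ) = (d : ℝ) - 1 := by
    have : (1 : ℕ) ≤ d := hd
    push_cast [Nat.cast_sub this]
    ring
  have hkey : θ (d - 1) = Real.exp (-lam) * θ d := by
    rw [hθ, hθ, hcast, show lam * ((d:ℝ) - 1) = -lam + lam * d by ring, Real.exp_add]
    ring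
  have h1 : Real.exp (-lam) * wInter ≤ Real.exp (-lam) * θ d :=
    mul_le_mul_of_nonneg_left hreject (Real.exp_pos _).le
  refine ⟨le_trans (hkey ▸ h1) hform, Real.exp_pos _, ?_⟩
  rw [Real.exp_lt_one_iff]
  linarith
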